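/- arXiv:2505.13678 — 7 statements merged into one kernel-verified Lean document; each statement's English description precedes it below -/
import Mathlib

section
/- Let U and V be Fréchet spaces (complete metrizable locally convex real topological vector spaces) with the Montel property, and let W be a locally convex Hausdorff topological real vector space. Suppose φ_t : U → V and ψ_t : V → W, for t ∈ (0,1), are families of continuous linear maps, and φ₀ : U → V, ψ₀ : V → W are continuous linear maps such that φ_t(u) → φ₀(u) for every u ∈ U and ψ_t(v) → ψ₀(v) for every v ∈ V as t → 0. Then the composite family ψ_t ∘ φ_t converges to ψ₀ ∘ φ₀ in the strong topology on continuous linear maps U → W as t → 0. -/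
/-!
By Banach–Steinhaus (`U` and `V` are Baire, hence barrelled), every sequence `φ tₙ`, `ψ tₙ`
with `tₙ → 0` is equicontinuous, hence so is `ψ tₙ ∘ φ tₙ`. Equicontinuity upgrades
pointwise convergence to uniform convergence on compact sets; applied to `ψ tₙ` on the compact
set `{φ₀ u} ∪ {φ tₙ u}` it gives `ψ tₙ (φ tₙ u) → ψ₀ (φ₀ u)`, and applied to the composites
on the compact closures of bounded subsets of the Montel space `U` it gives strong convergence.
-/

open Filter Set Topology Uniformity Bornology

theorem UniformEquicontinuous.indexwise_comp {ι α β γ : Type*} [UniformSpace α] [UniformSpace β]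
    [UniformSpace γ] {G : ι → β → α} {F : ι → γ → β} (hG : UniformEquicontinuous G)
    (hF : UniformEquicontinuous F) : UniformEquicontinuous fun i ↦ G i ∘ F i :=
  fun _ hU ↦ (hF _ (hG _ hU)).mono fun _ h i ↦ h i i

theorem EquicontinuousOn.tendstoUniformlyOn_of_tendsto {ι X α : Type*} [TopologicalSpace X]
    [UniformSpace α] {F : ι → X → α} {f : X → α} {K : Set X} {l : Filter ι}
    (hF : EquicontinuousOn F K) (hK : IsCompact K)
    (h : ∀ x ∈ K, Tendsto (F · x) l (𝓝 (f x))) : TendstoUniformlyOn F f l K := by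
  have hK' : ∀ K' ∈ ({K} : Set (Set X)), IsCompact K' := by simpa
  have hF' : ∀ K' ∈ ({K} : Set (Set X)), EquicontinuousOn F K' := by simpa
  refine UniformOnFun.tendsto_iff_tendstoUniformlyOn.mp
    ((EquicontinuousOn.tendsto_uniformOnFun_iff_pi' hK' hF' l f).mpr ?_) K rfl
  exact tendsto_pi_nhds.mpr fun x ↦ h x (by simpa using x.2)

theorem Equicontinuous.tendsto_apply_of_tendsto {X α : Type*} [TopologicalSpace X]
    [UniformSpace α] {F : ℕ → X → α} {f : X → α} (hF : Equicontinuous F)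
    (h : ∀ x, Tendsto (F · x) atTop (𝓝 (f x))) {g : ℕ → X} {x : X}
    (hg : Tendsto g atTop (𝓝 x)) : Tendsto (fun n ↦ F n (g n)) atTop (𝓝 (f x)) := by
  have hunif : TendstoUniformlyOn F f atTop (insert x (range g)) :=
    (hF.equicontinuousOn _).tendstoUniformlyOn_of_tendsto hg.isCompact_insert_range
      fun y _ ↦ h y
  have hf : Continuous f := (tendsto_pi_nhds.mpr h).continuous_of_equicontinuous hF
  refine hunif.tendsto_comp hf.continuousAt.continuousWithinAt
    (tendsto_nhdsWithin_iff.mpr ⟨hg, Eventually.of_forall fun n ↦ ?_⟩)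
  exact mem_insert_of_mem _ (mem_range_self n)

theorem uniformEquicontinuous_of_tendsto_apply {𝕜 E F : Type*} [NontriviallyNormedField 𝕜]
    [AddCommGroup E] [Module 𝕜 E] [UniformSpace E] [IsUniformAddGroup E] [ContinuousSMul 𝕜 E]
    [BarrelledSpace 𝕜 E] [AddCommGroup F] [Module 𝕜 F] [UniformSpace F] [IsUniformAddGroup F]
    [ContinuousSMul 𝕜 F] [PolynormableSpace 𝕜 F] {T : ℕ → E →L[𝕜] F} {f : E → F}
    (h : ∀ x, Tendsto (T · x) atTop (𝓝 (f x))) : UniformEquicontinuous fun n ↦ ⇑(T n) :=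
  PolynormableSpace.banach_steinhaus fun x ↦ (h x).isVonNBounded_range 𝕜

theorem ContinuousLinearMap.tendsto_of_equicontinuous_of_tendsto_apply {𝕜 E F : Type*}
    [NormedField 𝕜] [AddCommGroup E] [Module 𝕜 E] [TopologicalSpace E]
    [AddCommGroup F] [Module 𝕜 F] [UniformSpace F] [IsUniformAddGroup F]
    (hE : ∀ s : Set E, IsVonNBounded 𝕜 s → IsCompact (closure s)) {ι : Type*} {l : Filter ι}
    {T : ι → E →L[𝕜] F} {T₀ : E →L[𝕜] F}
    (hT : Equicontinuous fun i ↦ ⇑(T i)) (h : ∀ x, Tendsto (T · x) l (𝓝 (T₀ x))) :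
    Tendsto T l (𝓝 T₀) := by
  refine (UniformConvergenceCLM.tendsto_iff_tendstoUniformlyOn (σ := RingHom.id 𝕜) F
    {S : Set E | IsVonNBounded 𝕜 S}).mpr fun S hS ↦ ?_
  exact ((hT.equicontinuousOn _).tendstoUniformlyOn_of_tendsto (hE S hS) fun x _ ↦ h x).mono
    subset_closure

theorem composition_of_weakly_convergent_families_converges_strongly_general
    {U V W : Type*}
    [AddCommGroup U] [Module ℝ U] [UniformSpace U] [IsUniformAddGroup U]
    [ContinuousSMul ℝ U] [CompleteSpace U]
    [TopologicalSpace.MetrizableSpace U]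
    [AddCommGroup V] [Module ℝ V] [UniformSpace V] [IsUniformAddGroup V]
    [ContinuousSMul ℝ V] [LocallyConvexSpace ℝ V] [CompleteSpace V]
    [TopologicalSpace.MetrizableSpace V]
    [AddCommGroup W] [Module ℝ W] [UniformSpace W] [IsUniformAddGroup W]
    [ContinuousSMul ℝ W] [LocallyConvexSpace ℝ W]
    (hUMontel : ∀ s : Set U, Bornology.IsVonNBounded ℝ s → IsCompact (closure s))
    (φ : ℝ → U →L[ℝ] V) (ψ : ℝ → V →L[ℝ] W)
    (φ₀ : U →L[ℝ] V) (ψ₀ : V →L[ℝ] W)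
    (hφ : ∀ u : U, Tendsto (fun t => φ t u) (nhdsWithin 0 (Set.Ioo 0 1)) (nhds (φ₀ u)))
    (hψ : ∀ v : V, Tendsto (fun t => ψ t v) (nhdsWithin 0 (Set.Ioo 0 1)) (nhds (ψ₀ v))) :
    Tendsto (fun t => (ψ t).comp (φ t)) (nhdsWithin 0 (Set.Ioo 0 1))
      (nhds (ψ₀.comp φ₀)) := by
  have : (𝓤 U).IsCountablyGenerated := IsUniformAddGroup.uniformity_countably_generated
  have : (𝓤 V).IsCountablyGenerated := IsUniformAddGroup.uniformity_countably_generated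
  refine tendsto_iff_seq_tendsto.mpr fun t ht ↦ ?_
  have hφt : ∀ u, Tendsto (fun n ↦ φ (t n) u) atTop (𝓝 (φ₀ u)) := fun u ↦ (hφ u).comp ht
  have hψt : ∀ v, Tendsto (fun n ↦ ψ (t n) v) atTop (𝓝 (ψ₀ v)) := fun v ↦ (hψ v).comp ht
  have hψeq := uniformEquicontinuous_of_tendsto_apply hψt
  have hcomp := hψeq.indexwise_comp (uniformEquicontinuous_of_tendsto_apply hφt)
  exact ContinuousLinearMap.tendsto_of_equicontinuous_of_tendsto_apply hUMontel
    hcomp.equicontinuous fun u ↦ hψeq.equicontinuous.tendsto_apply_of_tendsto hψt (hφt u)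

/-- **Composition of weakly convergent families of operators converges strongly.**
Let `U` and `V` be Fréchet spaces (complete metrizable locally convex real topological
vector spaces) with the Montel property (every von Neumann bounded set is relatively
compact), and let `W` be a locally convex Hausdorff topological real vector space.
If `φ t : U →L[ℝ] V` and `ψ t : V →L[ℝ] W`, for `t ∈ (0,1)`, converge pointwise to
`φ₀` and `ψ₀` respectively as `t → 0`, then `ψ t ∘ φ t` converges to `ψ₀ ∘ φ₀` in the
strong topology (the topology of uniform convergence on bounded sets, which is the
default topology on continuous linear maps in Mathlib). -/
theorem composition_of_weakly_convergent_families_converges_strongly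
    {U V W : Type*}
    [AddCommGroup U] [Module ℝ U] [UniformSpace U] [IsUniformAddGroup U]
    [ContinuousSMul ℝ U] [LocallyConvexSpace ℝ U] [CompleteSpace U]
    [TopologicalSpace.MetrizableSpace U]
    [AddCommGroup V] [Module ℝ V] [UniformSpace V] [IsUniformAddGroup V]
    [ContinuousSMul ℝ V] [LocallyConvexSpace ℝ V] [CompleteSpace V]
    [TopologicalSpace.MetrizableSpace V]
    [AddCommGroup W] [Module ℝ W] [UniformSpace W] [IsUniformAddGroup W]
    [ContinuousSMul ℝ W] [LocallyConvexSpace ℝ W] [T2Space W]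
    (hUMontel : ∀ s : Set U, Bornology.IsVonNBounded ℝ s → IsCompact (closure s))
    (hVMontel : ∀ s : Set V, Bornology.IsVonNBounded ℝ s → IsCompact (closure s))
    (φ : ℝ → U →L[ℝ] V) (ψ : ℝ → V →L[ℝ] W)
    (φ₀ : U →L[ℝ] V) (ψ₀ : V →L[ℝ] W)
    (hφ : ∀ u : U, Tendsto (fun t => φ t u) (nhdsWithin 0 (Set.Ioo 0 1)) (nhds (φ₀ u)))
    (hψ : ∀ v : V, Tendsto (fun t => ψ t v) (nhdsWithin 0 (Set.Ioo 0 1)) (nhds (ψ₀ v))) :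
    Tendsto (fun t => (ψ t).comp (φ t)) (nhdsWithin 0 (Set.Ioo 0 1))
      (nhds (ψ₀.comp φ₀)) :=
  composition_of_weakly_convergent_families_converges_strongly_general hUMontel φ ψ φ₀ ψ₀ hφ hψ
end

section
/- For every connected stable ribbon graph Γ: (i) the integer |E(Γ)| + |C(Γ)| − β_Γ# is even; (ii) β_Γ# + 2|V(Γ)| ≤ |E(Γ)| + |C(Γ)| + 2, i.e. 1 − |V(Γ)| + (|E(Γ)| + |C(Γ)| − β_Γ#)/2 ≥ 0. Consequently the genus g(Γ) is a nonnegative integer, g(Γ) ≥ Σ_{v ∈ V(Γ)} g(v), and in particular g(v) ≤ g(Γ) for every vertex v of Γ. -/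
noncomputable section

/-- The set of orbits ("cycles", counting fixed points, i.e. `1`-cycles)
of a permutation `σ` of `α`: each orbit is recorded as the set of points
in the same cycle of `σ` as some given point. -/
def permOrbits {α : Type*} (σ : Equiv.Perm α) : Set (Set α) :=
  Set.range fun a => {x | σ.SameCycle a x}

/-- The data of a stable ribbon graph (the stability and connectedness conditions
are stated separately as `RibbonGraph.IsStable` and `RibbonGraph.Connected`):
a finite set `H` of half-edges, a finite set `V` of vertices, an incidence map
`ρ : H → V`, an involution `κ` of `H` (whose fixed points are the legs and whose
`2`-element orbits are the edges), a permutation `c` of `H` preserving each fiber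
of `ρ` (whose orbits inside `ρ⁻¹(v)` form the cyclic decomposition `C(v)` of the
vertex `v`), and genus and boundary functions `g, b : V → ℕ`. -/
structure RibbonGraph where
  /-- the half-edges -/
  H : Type
  /-- the vertices -/
  V : Type
  fintH : Fintype H
  fintV : Fintype V
  /-- the incidence map -/
  ρ : H → V
  /-- the involution determining the legs and the edges -/
  κ : Equiv.Perm H
  κ_invol : ∀ h, κ (κ h) = h
  /-- the permutation determining the cyclic decomposition of each vertex -/
  c : Equiv.Perm H
  c_fiber : ∀ h, ρ (c h) = ρ h
  /-- the genus of each vertex -/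
  g : V → ℕ
  /-- the boundary of each vertex -/
  b : V → ℕ

attribute [instance] RibbonGraph.fintH RibbonGraph.fintV

namespace RibbonGraph

variable (Γ : RibbonGraph)

/-- The set `L(Γ)` of legs: the fixed points of the involution `κ`. -/
def legSet : Set Γ.H := {h | Γ.κ h = h}

/-- `|L(Γ)|`, the number of legs. -/
def numLegs : ℕ := Γ.legSet.ncard

/-- The set `E(Γ)` of edges: the `2`-element orbits of the involution `κ`. -/
def edgeSet : Set (Set Γ.H) := {S | ∃ h, Γ.κ h ≠ h ∧ S = {h, Γ.κ h}}

/-- `|E(Γ)|`, the number of edges. -/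
def numEdges : ℕ := Γ.edgeSet.ncard

/-- `|v|`, the valency of a vertex: the number of incident half-edges. -/
def valency (v : Γ.V) : ℕ := {h | Γ.ρ h = v}.ncard

/-- `|C(v)|`, the number of cycles in the cyclic decomposition of the vertex `v`:
the number of orbits of `c` contained in the fiber `ρ⁻¹(v)`. -/
def numCyclesAt (v : Γ.V) : ℕ := {S ∈ permOrbits Γ.c | ∃ h ∈ S, Γ.ρ h = v}.ncard

/-- `|C(Γ)|`, the total number of orbits of the permutation `c`. -/
def numCycles : ℕ := (permOrbits Γ.c).ncard

/-- `β_Γ#`, the number of orbits (cycles, counting fixed points) of the composite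
permutation `c ∘ κ`. -/
def betaSharp : ℕ := (permOrbits (Γ.c * Γ.κ)).ncard

/-- The loop number `l(v) = 2 g(v) + b(v) + |C(v)| − 1` of a vertex. -/
def vertexLoop (v : Γ.V) : ℚ := 2 * Γ.g v + Γ.b v + Γ.numCyclesAt v - 1

/-- Stability: `|C(v)| + b(v) > 0` and `2 l(v) + |v| ≥ 3` for every vertex. -/
def IsStable : Prop :=
  ∀ v : Γ.V, 0 < Γ.numCyclesAt v + Γ.b v ∧ 3 ≤ 2 * Γ.vertexLoop v + Γ.valency v

/-- The relation on vertices relating `ρ(h)` to `ρ(κ(h))` for each half-edge `h`. -/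
def adjRel : Γ.V → Γ.V → Prop := fun v w => ∃ h, Γ.ρ h = v ∧ Γ.ρ (Γ.κ h) = w

/-- Connectedness: the vertex set is nonempty and the equivalence relation generated
by `adjRel` relates any two vertices. -/
def Connected : Prop :=
  Nonempty Γ.V ∧ ∀ v w : Γ.V, Relation.EqvGen Γ.adjRel v w

/-- The first Betti number `b₁(Γ) = |E(Γ)| − |V(Γ)| + 1` of a connected graph. -/
def betti : ℚ := (Γ.numEdges : ℚ) - Fintype.card Γ.V + 1

/-- The genus `g(Γ) = 1 − |V(Γ)| + (|E(Γ)| + |C(Γ)| − β_Γ#)/2 + Σ_v g(v)` of a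
connected stable ribbon graph. -/
def genus : ℚ :=
  1 - (Fintype.card Γ.V : ℚ) + ((Γ.numEdges : ℚ) + Γ.numCycles - Γ.betaSharp) / 2
    + ∑ v, (Γ.g v : ℚ)

/-- The number of boundary components `B(Γ) = β_Γ# + Σ_v b(v)`. -/
def numBoundary : ℚ := (Γ.betaSharp : ℚ) + ∑ v, (Γ.b v : ℚ)

/-- The loop number `ℓ(Γ) = 2 g(Γ) + B(Γ) − 1`. -/
def loopNumber : ℚ := 2 * Γ.genus + Γ.numBoundary - 1

end RibbonGraph

/-
Write `N π` for the number of cycles of a permutation `π` of the `n` half-edges, so that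
`|C(Γ)| = N c` and `β_Γ# = N (c * κ)`, and `N κ = n - |E(Γ)|` because `κ` is an involution.

Parity: `sign π = (-1) ^ (n + N π)`, so multiplicativity of the sign gives
`N c + N κ + N (c * κ) ≡ n (mod 2)`, which is (i).

Inequality: for any permutations `σ, τ` with `K` orbits of the group they generate,
`N σ + N τ + N (σ * τ) ≤ n + 2 K`, the Euler characteristic bound `2 - 2g ≤ 2` summed over
the `K` surfaces they glue. It is proved by peeling transpositions off `τ`: multiplying by a
transposition `(x y)` changes `N` by exactly `±1`, splitting a cycle if `x, y` share one and
merging two otherwise. Finally, edges glue the `N c` cycles of `c` into `K` classes, and since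
the vertex graph is connected the same edges must merge the `|V(Γ)|` vertices into one, which
forces `K + |V(Γ)| ≤ N c + 1`. Together these give (ii).
-/

open Relation Finset

namespace Relation

variable {α : Type*}

def addEdge (r : α → α → Prop) (x y : α) : α → α → Prop :=
  fun a b => r a b ∨ a = x ∧ b = y

theorem EqvGen.of_addEdge {r : α → α → Prop} {x y a b : α} (h : EqvGen (addEdge r x y) a b) :
    EqvGen r a b ∨ (EqvGen r a x ∨ EqvGen r a y) ∧ (EqvGen r b x ∨ EqvGen r b y) := by
  induction h with
  | rel a b h =>
    rcases h with h | ⟨rfl, rfl⟩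
    · exact .inl (.rel _ _ h)
    · exact .inr ⟨.inl (.refl _), .inr (.refl _)⟩
  | refl a => exact .inl (.refl _)
  | symm a b _ ih => exact ih.imp (.symm _ _) And.symm
  | trans a b c _ _ ih₁ ih₂ =>
    rcases ih₁ with hab | ⟨ha, hb⟩ <;> rcases ih₂ with hbc | ⟨hb', hc⟩
    · exact .inl (.trans _ _ _ hab hbc)
    · exact .inr ⟨hb'.imp (.trans _ _ _ hab) (.trans _ _ _ hab), hc⟩
    · exact .inr ⟨ha, hb.imp (.trans _ _ _ (.symm _ _ hbc)) (.trans _ _ _ (.symm _ _ hbc))⟩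
    · exact .inr ⟨ha, hc⟩

theorem EqvGen.map_of_or {β : Type*} {f : α → β} {r s : α → α → Prop}
    (hr : ∀ a b, r a b → f a = f b) {a b : α} (h : EqvGen (fun a b => r a b ∨ s a b) a b) :
    EqvGen (Relation.Map s f f) (f a) (f b) := by
  induction h with
  | rel a b h =>
    exact h.elim (fun h => hr a b h ▸ .refl _) fun h => .rel _ _ ⟨a, b, h, rfl, rfl⟩
  | refl => exact .refl _
  | symm _ _ _ ih => exact .symm _ _ ih
  | trans _ _ _ _ _ ih₁ ih₂ => exact .trans _ _ _ ih₁ ih₂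

end Relation

namespace Quot

variable {α : Type*} {r s : α → α → Prop}

theorem natCard_eq_ncard_range {β : Type*} {f : α → β}
    (hf : ∀ a b, f a = f b ↔ EqvGen r a b) :
    Nat.card (Quot r) = (Set.range f).ncard := by
  rw [← Nat.card_coe_set_eq]
  refine Nat.card_congr (Equiv.ofBijective (Quot.lift (fun a => ⟨f a, a, rfl⟩)
    fun a b h => Subtype.ext ((hf a b).2 (.rel _ _ h))) ⟨?_, ?_⟩)
  · rintro ⟨a⟩ ⟨b⟩ h
    exact Quot.eqvGen_sound ((hf a b).1 (congrArg Subtype.val h))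
  · rintro ⟨_, a, rfl⟩
    exact ⟨Quot.mk r a, rfl⟩

theorem natCard_eq_of_forall_eq (h : ∀ a b, r a b → a = b) :
    Nat.card (Quot r) = Nat.card α := by
  rw [natCard_eq_ncard_range (f := id) fun a b =>
      ⟨fun hab => (show a = b from hab) ▸ .refl a, fun hab => EqvGen.eqvGen_le h a b hab⟩,
    Set.range_id, Set.ncard_univ]

variable [Finite α]

theorem natCard_le_of_forall_eqvGen (h : ∀ a b, r a b → EqvGen s a b) :
    Nat.card (Quot s) ≤ Nat.card (Quot r) :=
  Nat.card_le_card_of_surjective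
    (Quot.lift (Quot.mk s) fun a b hab => Quot.eqvGen_sound (h a b hab))
    (Quot.ind fun a => ⟨Quot.mk r a, rfl⟩)

theorem natCard_eq_of_forall_eqvGen (hrs : ∀ a b, r a b → EqvGen s a b)
    (hsr : ∀ a b, s a b → EqvGen r a b) : Nat.card (Quot r) = Nat.card (Quot s) :=
  (natCard_le_of_forall_eqvGen hsr).antisymm (natCard_le_of_forall_eqvGen hrs)

variable {x y : α}

theorem natCard_addEdge_of_eqvGen (h : EqvGen r x y) :
    Nat.card (Quot (addEdge r x y)) = Nat.card (Quot r) :=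
  natCard_eq_of_forall_eqvGen
    (fun _ _ hab => hab.elim (.rel _ _) fun ⟨ha, hb⟩ => ha ▸ hb ▸ h)
    (fun _ _ hab => .rel _ _ (.inl hab))

theorem natCard_le_natCard_addEdge_add_one :
    Nat.card (Quot r) ≤ Nat.card (Quot (addEdge r x y)) + 1 := by
  classical
  let q : Quot r → Quot (addEdge r x y) :=
    Quot.lift (Quot.mk _) fun a b hab => Quot.sound (.inl hab)
  -- only the classes of `x` and `y` can be merged, so `q` is injective away from that of `y`
  let f : Quot r → Option (Quot (addEdge r x y)) := fun p =>
    if p = Quot.mk r y then none else some (q p)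
  have hf : Function.Injective f := by
    intro p₁ p₂ he
    induction p₁ using Quot.ind with | mk a => ?_
    induction p₂ using Quot.ind with | mk b => ?_
    by_cases ha : Quot.mk r a = Quot.mk r y <;> by_cases hb : Quot.mk r b = Quot.mk r y <;>
      simp only [f, ha, hb, if_true, if_false, reduceCtorEq, Option.some.injEq] at he
    · exact ha.trans hb.symm
    rcases (Quot.eqvGen_exact he).of_addEdge with hab | ⟨hax | hay, hbx | hby⟩
    · exact Quot.eqvGen_sound hab
    · exact Quot.eqvGen_sound (.trans _ _ _ hax (.symm _ _ hbx))
    · exact absurd (Quot.eqvGen_sound hby) hb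
    all_goals exact absurd (Quot.eqvGen_sound hay) ha
  simpa using Nat.card_le_card_of_injective f hf

theorem natCard_addEdge_add_one_of_not_eqvGen (h : ¬EqvGen r x y) :
    Nat.card (Quot (addEdge r x y)) + 1 = Nat.card (Quot r) := by
  let q : Quot r → Quot (addEdge r x y) :=
    Quot.lift (Quot.mk _) fun a b hab => Quot.sound (.inl hab)
  have hq : Function.Surjective q := Quot.ind fun a => ⟨Quot.mk r a, rfl⟩
  have hq' : ¬Function.Injective q := fun hinj =>
    h (Quot.eqvGen_exact (hinj (Quot.sound (.inr ⟨rfl, rfl⟩))))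
  have hlt : Nat.card (Quot (addEdge r x y)) < Nat.card (Quot r) :=
    lt_of_not_ge fun hle => hq' (hq.bijective_of_nat_card_le hle).1
  have := natCard_le_natCard_addEdge_add_one (r := r) (x := x) (y := y)
  omega

/-- Adding the edges `s` loses at least as many classes upstairs as their images lose in `β`. -/
theorem natCard_or_add_natCard_le {β : Type*} [Finite β] (f : α → β)
    (hr : ∀ a b, r a b → f a = f b) (s : α → α → Prop) :
    Nat.card (Quot fun a b => r a b ∨ s a b) + Nat.card β ≤
      Nat.card (Quot r) + Nat.card (Quot (Relation.Map s f f)) := by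
  suffices ∀ S : Set (α × α), S.Finite →
      Nat.card (Quot fun a b => r a b ∨ (a, b) ∈ S) + Nat.card β ≤
        Nat.card (Quot r) + Nat.card (Quot (Relation.Map (fun a b => (a, b) ∈ S) f f)) from
    this {p | s p.1 p.2} (Set.toFinite _)
  intro S hS
  induction S, hS using Set.Finite.induction_on with
  | empty =>
    rw [natCard_eq_of_forall_eqvGen (s := r) (fun a b h => h.elim (.rel _ _) False.elim)
        (fun a b h => .rel _ _ (.inl h)),
      natCard_eq_of_forall_eq (r := Relation.Map (fun a b => (a, b) ∈ (∅ : Set (α × α))) f f)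
        fun _ _ ⟨_, _, h, _⟩ => h.elim]
  | @insert p S _ _ ih =>
    have hH : (fun a b => r a b ∨ (a, b) ∈ insert p S) =
        addEdge (fun a b => r a b ∨ (a, b) ∈ S) p.1 p.2 := by
      funext a b
      simp only [addEdge, Set.mem_insert_iff, Prod.ext_iff]
      exact propext (by tauto)
    have hV : Relation.Map (fun a b => (a, b) ∈ insert p S) f f =
        addEdge (Relation.Map (fun a b => (a, b) ∈ S) f f) (f p.1) (f p.2) := by
      funext v w
      simp only [Relation.Map, addEdge, Set.mem_insert_iff, Prod.ext_iff]
      refine propext ⟨?_, ?_⟩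
      · rintro ⟨a, b, ⟨rfl, rfl⟩ | h, rfl, rfl⟩
        exacts [.inr ⟨rfl, rfl⟩, .inl ⟨a, b, h, rfl, rfl⟩]
      · rintro (⟨a, b, h, rfl, rfl⟩ | ⟨rfl, rfl⟩)
        exacts [⟨a, b, .inr h, rfl, rfl⟩, ⟨p.1, p.2, .inl ⟨rfl, rfl⟩, rfl, rfl⟩]
    rw [hH, hV]
    by_cases hc : EqvGen (fun a b => r a b ∨ (a, b) ∈ S) p.1 p.2
    · rwa [natCard_addEdge_of_eqvGen hc, natCard_addEdge_of_eqvGen (hc.map_of_or hr)]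
    · have hH' := natCard_addEdge_add_one_of_not_eqvGen hc
      have hV' := natCard_le_natCard_addEdge_add_one
        (r := Relation.Map (fun a b => (a, b) ∈ S) f f) (x := f p.1) (y := f p.2)
      omega

end Quot

namespace Equiv.Perm

variable {α : Type*} {σ : Perm α}

theorem sameCycle_iff_eqvGen [Finite α] {a b : α} :
    σ.SameCycle a b ↔ EqvGen (fun x y => σ x = y) a b := by
  constructor
  · intro h
    obtain ⟨n, -, rfl⟩ := h.exists_nat_pow_eq
    clear h
    induction n with
    | zero => exact .refl a
    | succ n ih => exact .trans _ _ _ ih (.rel _ _ (by rw [pow_succ', mul_apply]))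
  · intro h
    induction h with
    | rel a b h => exact h ▸ sameCycle_apply_right.2 (.refl σ a)
    | refl a => exact .refl σ a
    | symm a b _ ih => exact ih.symm
    | trans a b c _ _ ih₁ ih₂ => exact ih₁.trans ih₂

theorem setOf_sameCycle_of_apply_eq {a : α} (ha : σ a = a) : {x | σ.SameCycle a x} = {a} :=
  Set.ext fun _ => ⟨fun h => (h.eq_of_left ha).symm, fun h => h ▸ .refl σ a⟩

theorem sameCycle_iff_of_involutive (hσ : Function.Involutive σ) {a x : α} :
    σ.SameCycle a x ↔ x = a ∨ x = σ a := by
  have hσ2 : σ ^ (2 : ℤ) = 1 := Equiv.ext hσ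
  constructor
  · rintro ⟨i, rfl⟩
    obtain ⟨k, rfl | rfl⟩ := i.even_or_odd'
    · left
      rw [zpow_mul, hσ2, one_zpow, one_apply]
    · right
      rw [zpow_add_one, zpow_mul, hσ2, one_zpow, one_mul]
  · rintro (rfl | rfl)
    exacts [.refl σ _, sameCycle_apply_right.2 (.refl σ _)]

variable [Fintype α] [DecidableEq α]

theorem image_support_cycleFactorsFinset :
    (fun c : Perm α => (c.support : Set α)) '' σ.cycleFactorsFinset =
      (fun a => {x | σ.SameCycle a x}) '' {a | σ a ≠ a} := by
  have hsupp : ∀ {a}, σ a ≠ a → ((σ.cycleOf a).support : Set α) = {x | σ.SameCycle a x} :=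
    fun ha => Set.ext fun _ => mem_support_cycleOf_iff' ha
  ext O
  constructor
  · rintro ⟨c, hc, rfl⟩
    obtain ⟨a, ha⟩ := (mem_cycleFactorsFinset_iff.1 hc).1.nonempty_support
    have hσa : σ a ≠ a := mem_support.1 (mem_cycleFactorsFinset_support_le hc ha)
    exact ⟨a, hσa, by dsimp only; rw [cycle_is_cycleOf ha hc, hsupp hσa]⟩
  · rintro ⟨a, ha, rfl⟩
    exact ⟨σ.cycleOf a, cycleOf_mem_cycleFactorsFinset_iff.2 (mem_support.2 ha), hsupp ha⟩

theorem ncard_image_support_cycleFactorsFinset :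
    ((fun c : Perm α => (c.support : Set α)) '' σ.cycleFactorsFinset).ncard =
      Multiset.card σ.cycleType := by
  have hinj : Set.InjOn (fun c : Perm α => (c.support : Set α)) σ.cycleFactorsFinset := by
    intro c hc d hd hcd
    obtain ⟨a, ha⟩ := (mem_cycleFactorsFinset_iff.1 hc).1.nonempty_support
    have hd' : a ∈ d.support := Finset.coe_inj.1 hcd ▸ ha
    rw [cycle_is_cycleOf ha hc, cycle_is_cycleOf hd' hd]
  rw [hinj.ncard_image, Set.ncard_coe_finset, cycleType_def, Multiset.card_map]
  rfl

theorem card_support_add_ncard_setOf_apply_eq (σ : Perm α) :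
    #σ.support + {a | σ a = a}.ncard = Fintype.card α := by
  have hfix : {a | σ a = a} = (σ.support : Set α)ᶜ := by ext; simp
  rw [hfix, ← Set.ncard_coe_finset, Set.ncard_add_ncard_compl, Nat.card_eq_fintype_card]

end Equiv.Perm

section PermOrbits

open Equiv Equiv.Perm

variable {α : Type*}

theorem ncard_permOrbits_eq_natCard_quot [Finite α] (σ : Perm α) :
    (permOrbits σ).ncard = Nat.card (Quot fun a b => σ a = b) := by
  refine (Quot.natCard_eq_ncard_range fun a b => ?_).symm
  rw [← sameCycle_iff_eqvGen]
  exact ⟨fun h => (h ▸ SameCycle.refl σ b : b ∈ {x | σ.SameCycle a x}),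
    fun h => Set.ext fun x => ⟨h.symm.trans, h.trans⟩⟩

theorem eqvGen_addEdge_mul_swap [DecidableEq α] {r : α → α → Prop} {π : Perm α}
    (hπ : ∀ a, r a (π a)) (x y a : α) : EqvGen (addEdge r x y) a ((π * swap x y) a) := by
  have hswap : EqvGen (addEdge r x y) a (swap x y a) := by
    rcases eq_or_ne a x with rfl | hx
    · rw [swap_apply_left]
      exact .rel _ _ (.inr ⟨rfl, rfl⟩)
    rcases eq_or_ne a y with rfl | hy
    · rw [swap_apply_right]
      exact .symm _ _ (.rel _ _ (.inr ⟨rfl, rfl⟩))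
    rw [swap_apply_of_ne_of_ne hx hy]
    exact .refl a
  exact .trans _ _ _ hswap (.rel _ _ (.inl (hπ _)))

variable [Fintype α] [DecidableEq α]

theorem ncard_permOrbits (σ : Perm α) :
    (permOrbits σ).ncard = Multiset.card σ.cycleType + {a | σ a = a}.ncard := by
  have huniv : (Set.univ : Set α) = {a | σ a ≠ a} ∪ {a | σ a = a} :=
    (Set.eq_univ_of_forall fun a => ne_or_eq (σ a) a).symm
  have hsplit : permOrbits σ = (fun a => {x | σ.SameCycle a x}) '' {a | σ a ≠ a} ∪
      (fun a => {a}) '' {a | σ a = a} := by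
    rw [permOrbits, ← Set.image_univ, huniv, Set.image_union]
    exact congrArg _ (Set.image_congr fun a ha => setOf_sameCycle_of_apply_eq ha)
  have hdisj : Disjoint ((fun a => {x | σ.SameCycle a x}) '' {a | σ a ≠ a})
      ((fun a => {a}) '' {a | σ a = a}) := by
    rw [Set.disjoint_left]
    rintro _ ⟨a, ha, rfl⟩ ⟨b, hb, hab : {b} = {x | σ.SameCycle a x}⟩
    have hab : a = b := (hab ▸ SameCycle.refl σ a : a ∈ ({b} : Set α))
    exact ha (hab ▸ hb)
  rw [hsplit, Set.ncard_union_eq hdisj, ← image_support_cycleFactorsFinset,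
    ncard_image_support_cycleFactorsFinset, Set.ncard_image_of_injective _ Set.singleton_injective]

theorem ncard_permOrbits_add_ncard_pairs {κ : Perm α} (hκ : Function.Involutive κ) :
    (permOrbits κ).ncard + {S : Set α | ∃ a, κ a ≠ a ∧ S = {a, κ a}}.ncard =
      Fintype.card α := by
  have hpairs : {S : Set α | ∃ a, κ a ≠ a ∧ S = {a, κ a}} =
      (fun a => {x | κ.SameCycle a x}) '' {a | κ a ≠ a} := by
    have horbit : ∀ a, {x | κ.SameCycle a x} = {a, κ a} :=
      fun a => Set.ext fun x => sameCycle_iff_of_involutive hκ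
    ext S
    exact exists_congr fun a => and_congr_right fun _ => by dsimp only; rw [horbit, eq_comm]
  have hsupp : #κ.support = 2 * Multiset.card κ.cycleType := by
    rw [← sum_cycleType, cycleType_of_pow_prime_eq_one (p := 2) (Equiv.ext hκ),
      Multiset.sum_replicate, Multiset.card_replicate, smul_eq_mul, mul_comm]
  rw [hpairs, ← image_support_cycleFactorsFinset, ncard_image_support_cycleFactorsFinset,
    ncard_permOrbits, ← card_support_add_ncard_setOf_apply_eq κ, hsupp]
  ring

theorem sign_eq_negOnePow_ncard_permOrbits (σ : Perm α) :
    sign σ = Int.negOnePow (Fintype.card α + (permOrbits σ).ncard) := by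
  have hcard := card_support_add_ncard_setOf_apply_eq σ
  rw [sign_of_cycleType, sum_cycleType, ncard_permOrbits, ← zpow_natCast, ← Int.negOnePow_def,
    Int.negOnePow_eq_iff, Int.even_iff]
  push_cast
  omega

theorem even_card_add_ncard_permOrbits_add_ncard_permOrbits_mul (σ τ : Perm α) :
    Even (Fintype.card α + (permOrbits σ).ncard + (permOrbits τ).ncard +
      (permOrbits (σ * τ)).ncard) := by
  have h := sign_mul σ τ
  rw [sign_eq_negOnePow_ncard_permOrbits, sign_eq_negOnePow_ncard_permOrbits,
    sign_eq_negOnePow_ncard_permOrbits, ← Int.negOnePow_add, Int.negOnePow_eq_iff,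
    Int.even_iff] at h
  rw [Nat.even_iff]
  omega

theorem odd_ncard_permOrbits_mul_swap_add_ncard_permOrbits (σ : Perm α) {x y : α}
    (hxy : x ≠ y) : Odd ((permOrbits (σ * swap x y)).ncard + (permOrbits σ).ncard) := by
  have h := sign_mul σ (swap x y)
  rw [sign_swap hxy, mul_neg_one, sign_eq_negOnePow_ncard_permOrbits,
    sign_eq_negOnePow_ncard_permOrbits, ← Int.negOnePow_succ, Int.negOnePow_eq_iff,
    Int.even_iff] at h
  rw [Nat.odd_iff]
  omega

theorem natCard_quot_addEdge_mul_swap (r : α → α → Prop) (π : Perm α) (x y : α) :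
    Nat.card (Quot (addEdge (fun a b => r a b ∨ (π * swap x y) a = b) x y)) =
      Nat.card (Quot (addEdge (fun a b => r a b ∨ π a = b) x y)) := by
  have key : ∀ π' : Perm α, ∀ a b,
      addEdge (fun a b => r a b ∨ (π' * swap x y) a = b) x y a b →
        EqvGen (addEdge (fun a b => r a b ∨ π' a = b) x y) a b := by
    rintro π' a b ((h | rfl) | h)
    · exact .rel _ _ (.inl (.inl h))
    · exact eqvGen_addEdge_mul_swap (fun a => .inr rfl) x y a
    · exact .rel _ _ (.inr h)
  refine Quot.natCard_eq_of_forall_eqvGen (key π) fun a b h => ?_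
  exact key (π * swap x y) a b (by rwa [mul_swap_mul_self])

theorem ncard_permOrbits_mul_swap_le (σ : Perm α) (x y : α) :
    (permOrbits (σ * swap x y)).ncard ≤ (permOrbits σ).ncard + 1 := by
  have hJ := natCard_quot_addEdge_mul_swap (fun _ _ => False) σ x y
  simp only [false_or] at hJ
  rw [ncard_permOrbits_eq_natCard_quot, ncard_permOrbits_eq_natCard_quot]
  calc _ ≤ Nat.card (Quot (addEdge (fun a b => (σ * swap x y) a = b) x y)) + 1 :=
        Quot.natCard_le_natCard_addEdge_add_one
    _ = Nat.card (Quot (addEdge (fun a b => σ a = b) x y)) + 1 := by rw [hJ]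
    _ ≤ _ := Nat.add_le_add_right
      (Quot.natCard_le_of_forall_eqvGen (r := fun a b => σ a = b) fun a b h => .rel _ _ (.inl h)) 1

theorem ncard_permOrbits_mul_swap_of_not_sameCycle {σ : Perm α} {x y : α}
    (h : ¬σ.SameCycle x y) : (permOrbits (σ * swap x y)).ncard + 1 = (permOrbits σ).ncard := by
  have hxy : x ≠ y := fun hxy => h (hxy ▸ .refl σ x)
  -- `σ` and `σ * swap x y` become the same partition once the edge `x — y` is added; `σ` loses
  -- a class to it, `σ * swap x y` at most one, and the sign forces a parity change
  have hJ := natCard_quot_addEdge_mul_swap (fun _ _ => False) σ x y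
  simp only [false_or] at hJ
  have hσ := Quot.natCard_addEdge_add_one_of_not_eqvGen (mt sameCycle_iff_eqvGen.2 h)
  have hlow : Nat.card (Quot (addEdge (fun a b => (σ * swap x y) a = b) x y)) ≤
      Nat.card (Quot fun a b => (σ * swap x y) a = b) :=
    Quot.natCard_le_of_forall_eqvGen fun a b h => .rel _ _ (.inl h)
  have hupp := Quot.natCard_le_natCard_addEdge_add_one
    (r := fun a b => (σ * swap x y) a = b) (x := x) (y := y)
  have hodd := odd_ncard_permOrbits_mul_swap_add_ncard_permOrbits σ hxy
  rw [Nat.odd_iff, ncard_permOrbits_eq_natCard_quot, ncard_permOrbits_eq_natCard_quot] at hodd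
  rw [ncard_permOrbits_eq_natCard_quot, ncard_permOrbits_eq_natCard_quot]
  omega

theorem ncard_permOrbits_add_add_mul_le_mul_swap {σ τ : Perm α} {x y : α} (hxy : x ≠ y)
    (hy : τ y = y)
    (h : (permOrbits σ).ncard + (permOrbits τ).ncard + (permOrbits (σ * τ)).ncard ≤
      Fintype.card α + 2 * Nat.card (Quot fun a b => σ a = b ∨ τ a = b)) :
    (permOrbits σ).ncard + (permOrbits (τ * swap x y)).ncard +
        (permOrbits (σ * (τ * swap x y))).ncard ≤
      Fintype.card α + 2 * Nat.card (Quot fun a b => σ a = b ∨ (τ * swap x y) a = b) := by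
  have hτ : (permOrbits (τ * swap x y)).ncard + 1 = (permOrbits τ).ncard :=
    ncard_permOrbits_mul_swap_of_not_sameCycle fun h => hxy (h.eq_of_right hy)
  have hK : Nat.card (Quot fun a b => σ a = b ∨ (τ * swap x y) a = b) =
      Nat.card (Quot (addEdge (fun a b => σ a = b ∨ τ a = b) x y)) := by
    rw [← natCard_quot_addEdge_mul_swap]
    exact (Quot.natCard_addEdge_of_eqvGen (.rel _ _ (.inr (by simp [hy])))).symm
  rw [← mul_assoc]
  by_cases hc : EqvGen (fun a b => σ a = b ∨ τ a = b) x y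
  · have hK' := Quot.natCard_addEdge_of_eqvGen hc
    have hστ := ncard_permOrbits_mul_swap_le (σ * τ) x y
    omega
  · have hK' := Quot.natCard_addEdge_add_one_of_not_eqvGen hc
    have hστ : (permOrbits (σ * τ * swap x y)).ncard + 1 = (permOrbits (σ * τ)).ncard := by
      refine ncard_permOrbits_mul_swap_of_not_sameCycle fun h => hc ?_
      refine EqvGen.eqvGen_le (fun a b h => ?_) x y (sameCycle_iff_eqvGen.1 h)
      exact .trans _ _ _ (.rel _ _ (.inr rfl)) (.rel _ _ (.inl h))
    omega

theorem ncard_permOrbits_add_add_mul_le (σ τ : Perm α) :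
    (permOrbits σ).ncard + (permOrbits τ).ncard + (permOrbits (σ * τ)).ncard ≤
      Fintype.card α + 2 * Nat.card (Quot fun a b => σ a = b ∨ τ a = b) := by
  induction hn : #τ.support using Nat.strong_induction_on generalizing τ with
  | _ n ih =>
  subst hn
  rcases eq_or_ne τ 1 with rfl | hτ
  · have hone : (permOrbits (1 : Perm α)).ncard = Fintype.card α := by
      rw [ncard_permOrbits_eq_natCard_quot, ← Nat.card_eq_fintype_card]
      exact Quot.natCard_eq_of_forall_eq fun _ _ h => h
    have hK : Nat.card (Quot fun a b => σ a = b ∨ (1 : Perm α) a = b) =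
        (permOrbits σ).ncard := by
      rw [ncard_permOrbits_eq_natCard_quot]
      exact Quot.natCard_eq_of_forall_eqvGen
        (fun a b h => h.elim (fun h => .rel _ _ h) fun h => h ▸ .refl a)
        fun a b h => .rel _ _ (.inl h)
    rw [mul_one, hone, hK]
    omega
  obtain ⟨x, hx⟩ : ∃ x, τ x ≠ x := not_forall.1 fun h => hτ (Equiv.ext h)
  have hsupp : #(τ * swap x (τ x)).support < #τ.support := by
    rw [mul_swap_eq_swap_mul]
    exact card_support_swap_mul (τ.injective.ne hx)
  have hfix : (τ * swap x (τ x)) (τ x) = τ x := by simp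
  simpa only [mul_swap_mul_self] using
    ncard_permOrbits_add_add_mul_le_mul_swap hx.symm hfix (ih _ hsupp _ rfl)

end PermOrbits

namespace RibbonGraph

variable (Γ : RibbonGraph)

theorem ncard_permOrbits_κ_add_numEdges :
    (permOrbits Γ.κ).ncard + Γ.numEdges = Fintype.card Γ.H := by
  classical
  exact ncard_permOrbits_add_ncard_pairs Γ.κ_invol

theorem natCard_quot_c_or_κ_add_card_le (hconn : Γ.Connected) :
    Nat.card (Quot fun a b => Γ.c a = b ∨ Γ.κ a = b) + Fintype.card Γ.V ≤
      Γ.numCycles + 1 := by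
  have hadj : Relation.Map (fun a b => Γ.κ a = b) Γ.ρ Γ.ρ = Γ.adjRel := by
    funext v w
    exact propext ⟨fun ⟨a, _, hab, hv, hw⟩ => ⟨a, hv, hab ▸ hw⟩,
      fun ⟨a, hv, hw⟩ => ⟨a, _, rfl, hv, hw⟩⟩
  have hone : Nat.card (Quot Γ.adjRel) = 1 :=
    Nat.card_eq_one_iff_unique.2 ⟨⟨fun p q => Quot.induction_on₂ p q fun v w =>
      Quot.eqvGen_sound (hconn.2 v w)⟩, hconn.1.map (Quot.mk _)⟩
  have h := Quot.natCard_or_add_natCard_le Γ.ρ (r := fun a b => Γ.c a = b)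
    (fun a _ hab => hab ▸ (Γ.c_fiber a).symm) (fun a b => Γ.κ a = b)
  rwa [hadj, hone, ← ncard_permOrbits_eq_natCard_quot, Nat.card_eq_fintype_card (α := Γ.V)] at h

theorem even_numEdges_add_numCycles_sub_betaSharp :
    Even ((Γ.numEdges : ℤ) + Γ.numCycles - Γ.betaSharp) := by
  classical
  have h := even_card_add_ncard_permOrbits_add_ncard_permOrbits_mul Γ.c Γ.κ
  have hκ := Γ.ncard_permOrbits_κ_add_numEdges
  rw [Nat.even_iff] at h
  rw [Int.even_iff, numCycles, betaSharp]
  omega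

theorem betaSharp_add_two_mul_card_le (hconn : Γ.Connected) :
    (Γ.betaSharp : ℤ) + 2 * Fintype.card Γ.V ≤ Γ.numEdges + Γ.numCycles + 2 := by
  classical
  have h := ncard_permOrbits_add_add_mul_le Γ.c Γ.κ
  have hκ := Γ.ncard_permOrbits_κ_add_numEdges
  have hK := Γ.natCard_quot_c_or_κ_add_card_le hconn
  rw [numCycles] at hK ⊢
  rw [betaSharp]
  omega

theorem exists_genus_eq_add_sum (heven : Even ((Γ.numEdges : ℤ) + Γ.numCycles - Γ.betaSharp))
    (hle : (Γ.betaSharp : ℤ) + 2 * Fintype.card Γ.V ≤ Γ.numEdges + Γ.numCycles + 2) :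
    ∃ m : ℕ, Γ.genus = m + ∑ v, (Γ.g v : ℚ) := by
  obtain ⟨k, hk⟩ := heven
  refine ⟨(k + 1 - Fintype.card Γ.V).toNat, ?_⟩
  have hm : ((k + 1 - Fintype.card Γ.V).toNat : ℚ) = k + 1 - Fintype.card Γ.V := by
    rw [← Int.cast_natCast, Int.toNat_of_nonneg (by omega)]
    push_cast
    ring
  have hkQ : ((Γ.numEdges : ℚ) + Γ.numCycles - Γ.betaSharp) = k + k := by exact_mod_cast hk
  rw [genus, hkQ, hm]
  ring

end RibbonGraph

theorem RibbonGraph.genus_isNonnegInteger_and_le_general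
    (Γ : RibbonGraph) (hconn : Γ.Connected) :
    Even ((Γ.numEdges : ℤ) + (Γ.numCycles : ℤ) - (Γ.betaSharp : ℤ)) ∧
    (Γ.betaSharp : ℤ) + 2 * (Fintype.card Γ.V : ℤ) ≤ (Γ.numEdges : ℤ) + (Γ.numCycles : ℤ) + 2 ∧
    (∃ n : ℕ, Γ.genus = (n : ℚ)) ∧
    (∑ v, (Γ.g v : ℚ)) ≤ Γ.genus ∧
    ∀ v : Γ.V, (Γ.g v : ℚ) ≤ Γ.genus := by
  have heven := Γ.even_numEdges_add_numCycles_sub_betaSharp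
  have hle := Γ.betaSharp_add_two_mul_card_le hconn
  obtain ⟨m, hm⟩ := Γ.exists_genus_eq_add_sum heven hle
  have hsum : ∑ v, (Γ.g v : ℚ) ≤ Γ.genus := hm ▸ le_add_of_nonneg_left m.cast_nonneg
  refine ⟨heven, hle, ⟨m + ∑ v, Γ.g v, by rw [hm]; push_cast; rfl⟩, hsum, fun v => ?_⟩
  exact (Finset.single_le_sum (fun w _ => Nat.cast_nonneg (Γ.g w)) (Finset.mem_univ v)).trans hsum

/-- **Integrality and nonnegativity of the genus of a connected stable ribbon graph.**
For every connected stable ribbon graph `Γ`: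
(i) the integer `|E(Γ)| + |C(Γ)| − β_Γ#` is even;
(ii) `β_Γ# + 2 |V(Γ)| ≤ |E(Γ)| + |C(Γ)| + 2`, i.e.
`1 − |V(Γ)| + (|E(Γ)| + |C(Γ)| − β_Γ#)/2 ≥ 0`.
Consequently the genus `g(Γ)` is a nonnegative integer, `g(Γ) ≥ Σ_v g(v)`, and in
particular `g(v) ≤ g(Γ)` for every vertex `v` of `Γ`. -/
theorem RibbonGraph.genus_isNonnegInteger_and_le
    (Γ : RibbonGraph) (hstable : Γ.IsStable) (hconn : Γ.Connected) :
    Even ((Γ.numEdges : ℤ) + (Γ.numCycles : ℤ) - (Γ.betaSharp : ℤ)) ∧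
    (Γ.betaSharp : ℤ) + 2 * (Fintype.card Γ.V : ℤ) ≤ (Γ.numEdges : ℤ) + (Γ.numCycles : ℤ) + 2 ∧
    (∃ n : ℕ, Γ.genus = (n : ℚ)) ∧
    (∑ v, (Γ.g v : ℚ)) ≤ Γ.genus ∧
    ∀ v : Γ.V, (Γ.g v : ℚ) ≤ Γ.genus :=
  RibbonGraph.genus_isNonnegInteger_and_le_general Γ hconn
end
end

section
/- For every connected stable ribbon graph Γ, with loop number ℓ(Γ) = 2g(Γ) + B(Γ) − 1, the two inequalities 2ℓ(Γ) + |L(Γ)| ≥ 2 + |V(Γ)| ≥ 3 and |H(Γ)| ≤ 3|L(Γ)| + 6(ℓ(Γ) − 1) hold (the latter read as |H(Γ)| + 6 ≤ 3|L(Γ)| + 6ℓ(Γ)). -/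
noncomputable section

/-!
Both inequalities are sums of local ones. Counting half-edges by vertices and by the
involution `κ` gives `|H| = Σ_v |v| = |L| + 2|E|`, and since `|C(Γ)| = Σ_v |C(v)|` the loop
number splits as `ℓ(Γ) = b₁(Γ) + Σ_v l(v)`. Hence
`2ℓ(Γ) + |L| - 2 - |V| = Σ_v (2 l(v) + |v| - 3)` and
`3|L| + 6ℓ(Γ) - 6 - |H| = Σ_v (2 (2 l(v) + |v| - 3) + 2 l(v))`,
and every summand is nonnegative by stability, which forces `l(v) ≥ 0`.
-/

theorem Set.ncard_eq_sum_ncard_fiber {α β : Type*} {s : Set α} (hs : s.Finite) {f : α → β}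
    {t : Finset β} (hf : ∀ a ∈ s, f a ∈ t) :
    s.ncard = ∑ b ∈ t, {a ∈ s | f a = b}.ncard := by
  classical
  obtain ⟨s, rfl⟩ := hs.exists_finset_coe
  rw [Set.ncard_coe_finset, Finset.card_eq_sum_card_fiberwise hf]
  refine Finset.sum_congr rfl fun b _ => ?_
  rw [← Set.ncard_coe_finset, Finset.coe_filter]
  rfl

theorem Function.Involutive.ncard_not_fixed {α : Type*} [Finite α] {f : α → α}
    (hf : Function.Involutive f) :
    {x | f x ≠ x}.ncard = 2 * {S : Set α | ∃ x, f x ≠ x ∧ S = {x, f x}}.ncard := by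
  set E := {S : Set α | ∃ x, f x ≠ x ∧ S = {x, f x}}
  have hE : E.Finite := Set.toFinite E
  rw [Set.ncard_eq_sum_ncard_fiber (Set.toFinite {x | f x ≠ x})
    (f := fun x => ({x, f x} : Set α)) (t := hE.toFinset) fun x hx => hE.mem_toFinset.2 ⟨x, hx, rfl⟩,
    Finset.sum_const_nat (m := 2), ← Set.ncard_eq_toFinset_card E hE, mul_comm]
  rintro _ hS
  obtain ⟨x, hx, rfl⟩ := hE.mem_toFinset.1 hS
  have hfiber : {y ∈ {y | f y ≠ y} | ({y, f y} : Set α) = {x, f x}} = {x, f x} := by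
    ext y
    constructor
    · rintro ⟨-, hy⟩
      exact hy ▸ Set.mem_insert y _
    · rintro (rfl | rfl)
      · exact ⟨hx, rfl⟩
      · exact ⟨by simpa [hf x] using hx.symm, by rw [hf x, Set.pair_comm]⟩
  rw [hfiber, Set.ncard_pair hx.symm]

theorem Equiv.Perm.SameCycle.apply_eq_of_invariant {α β : Type*} [Finite α]
    {σ : Equiv.Perm α} {f : α → β} (hf : ∀ x, f (σ x) = f x) {x y : α}
    (h : σ.SameCycle x y) : f y = f x := by
  obtain ⟨n, rfl⟩ := h.exists_nat_pow_eq
  exact congrFun (Function.iterate_invariant (funext hf) n) x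

theorem ncard_permOrbits_eq_sum_of_invariant {α β : Type*} [Finite α] [Fintype β] [Nonempty β]
    (σ : Equiv.Perm α) (f : α → β) (hf : ∀ x, f (σ x) = f x) :
    (permOrbits σ).ncard = ∑ b, {S ∈ permOrbits σ | ∃ x ∈ S, f x = b}.ncard := by
  classical
  -- the default value is never taken, since orbits are nonempty
  let F : Set α → β := fun S => if h : S.Nonempty then f h.some else Classical.arbitrary β
  rw [Set.ncard_eq_sum_ncard_fiber (Set.toFinite _) (f := F) fun _ _ => Finset.mem_univ _]
  refine Finset.sum_congr rfl fun b _ => congrArg Set.ncard (Set.sep_ext_iff.2 ?_)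
  rintro _ ⟨a, rfl⟩
  have hconst : ∀ x ∈ {x | σ.SameCycle a x}, f x = f a := fun _ hx =>
    hx.apply_eq_of_invariant hf
  have hne : Set.Nonempty {x | σ.SameCycle a x} := ⟨a, .refl σ a⟩
  simp only [F, dif_pos hne, hconst _ hne.some_mem]
  exact ⟨fun h => ⟨a, .refl σ a, h⟩, fun ⟨x, hx, h⟩ => (hconst x hx).symm.trans h⟩

namespace RibbonGraph

variable (Γ : RibbonGraph)

theorem card_H_eq_numLegs_add_two_mul_numEdges :
    Fintype.card Γ.H = Γ.numLegs + 2 * Γ.numEdges := by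
  rw [← Nat.card_eq_fintype_card, ← Set.ncard_add_ncard_compl Γ.legSet]
  exact congrArg (Γ.numLegs + ·) (Function.Involutive.ncard_not_fixed Γ.κ_invol)

theorem card_H_eq_sum_valency : Fintype.card Γ.H = ∑ v, Γ.valency v := by
  rw [← Nat.card_eq_fintype_card, ← Set.ncard_univ,
    Set.ncard_eq_sum_ncard_fiber Set.finite_univ (f := Γ.ρ) fun _ _ => Finset.mem_univ _]
  simp only [Set.sep_univ, valency]

theorem loopNumber_eq_betti_add_sum_vertexLoop [Nonempty Γ.V] :
    Γ.loopNumber = Γ.betti + ∑ v, Γ.vertexLoop v := by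
  have hcycles : (Γ.numCycles : ℚ) = ∑ v, (Γ.numCyclesAt v : ℚ) := by
    exact_mod_cast ncard_permOrbits_eq_sum_of_invariant Γ.c Γ.ρ Γ.c_fiber
  simp only [loopNumber, genus, numBoundary, betti, vertexLoop, Finset.sum_sub_distrib,
    Finset.sum_add_distrib, ← Finset.mul_sum, hcycles, Finset.sum_const, Finset.card_univ,
    nsmul_eq_mul, mul_one]
  ring

theorem two_mul_loopNumber_add_numLegs [Nonempty Γ.V] :
    2 * Γ.loopNumber + Γ.numLegs
      = ∑ v, (2 * Γ.vertexLoop v + Γ.valency v) - 2 * Fintype.card Γ.V + 2 := by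
  have hH : (Γ.numLegs : ℚ) + 2 * Γ.numEdges = ∑ v, (Γ.valency v : ℚ) := by
    exact_mod_cast Γ.card_H_eq_numLegs_add_two_mul_numEdges.symm.trans Γ.card_H_eq_sum_valency
  rw [loopNumber_eq_betti_add_sum_vertexLoop, betti, Finset.sum_add_distrib, ← Finset.mul_sum]
  linear_combination hH

variable {Γ}

theorem IsStable.vertexLoop_nonneg (hΓ : Γ.IsStable) (v : Γ.V) : 0 ≤ Γ.vertexLoop v := by
  have hpos : (1 : ℚ) ≤ Γ.numCyclesAt v + Γ.b v := by exact_mod_cast (hΓ v).1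
  have hg : (0 : ℚ) ≤ Γ.g v := Nat.cast_nonneg _
  rw [vertexLoop]
  linarith

theorem IsStable.three_mul_card_V_le (hΓ : Γ.IsStable) :
    3 * (Fintype.card Γ.V : ℚ) ≤ ∑ v, (2 * Γ.vertexLoop v + Γ.valency v) := by
  simpa [mul_comm] using Finset.card_nsmul_le_sum Finset.univ _ 3 fun v _ => (hΓ v).2

end RibbonGraph

/-- **The fundamental inequalities for connected stable ribbon graphs.**
For every connected stable ribbon graph `Γ`, with loop number
`ℓ(Γ) = 2 g(Γ) + B(Γ) − 1`, the two inequalities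
`2 ℓ(Γ) + |L(Γ)| ≥ 2 + |V(Γ)| ≥ 3` and `|H(Γ)| ≤ 3 |L(Γ)| + 6 (ℓ(Γ) − 1)`
hold (the latter read as `|H(Γ)| + 6 ≤ 3 |L(Γ)| + 6 ℓ(Γ)`). -/
theorem RibbonGraph.graph_inequalities
    (Γ : RibbonGraph) (hstable : Γ.IsStable) (hconn : Γ.Connected) :
    (2 + (Fintype.card Γ.V : ℚ) ≤ 2 * Γ.loopNumber + Γ.numLegs ∧
      (3 : ℚ) ≤ 2 + (Fintype.card Γ.V : ℚ)) ∧
    (Fintype.card Γ.H : ℚ) + 6 ≤ 3 * Γ.numLegs + 6 * Γ.loopNumber := by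
  obtain ⟨hV, -⟩ := hconn
  have hcardV : (1 : ℚ) ≤ Fintype.card Γ.V := by exact_mod_cast Fintype.card_pos
  have hH : (Fintype.card Γ.H : ℚ) = ∑ v, (Γ.valency v : ℚ) := by
    exact_mod_cast Γ.card_H_eq_sum_valency
  have hloop := Γ.two_mul_loopNumber_add_numLegs
  have hlocal := hstable.three_mul_card_V_le
  have hnonneg : 0 ≤ ∑ v, Γ.vertexLoop v :=
    Finset.sum_nonneg fun v _ => hstable.vertexLoop_nonneg v
  rw [Finset.sum_add_distrib, ← Finset.mul_sum] at hloop hlocal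
  exact ⟨⟨by linarith, by linarith⟩, by linarith⟩
end
end

section
/- Let p ≥ 0 and let Γ be a connected stable ribbon graph that is a p-tree, i.e. b₁(Γ) = 0 and there is a vertex v₀ with l(v₀) = p while l(v) = 0 for every other vertex v. Then |L(Γ)| ≥ |v₀| + |V(Γ)| − 1. In particular the valency |v₀| of v₀ is at most the number of legs |L(Γ)|, with equality if and only if Γ is a corolla (i.e. |V(Γ)| = 1 and E(Γ) = ∅). -/
noncomputable section

/-! Count the half-edges twice: `|H| = |L| + 2|E|` and `|H| = Σ_v |v|`. Since `b₁ = 0` we have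
`|E| = |V| − 1`, and stability turns `l(v) = 0` into `|v| ≥ 3` for `v ≠ v₀`, so
`|L| = Σ_v |v| − 2(|V| − 1) ≥ |v₀| + 3(|V| − 1) − 2(|V| − 1) = |v₀| + |V| − 1`. -/

namespace Function.Involutive

variable {α : Type*} [Fintype α] {f : α → α}

theorem card_eq_ncard_fixed_add_two_mul_ncard_pairs (hf : Involutive f) :
    Fintype.card α =
      {a | f a = a}.ncard + 2 * {S : Set α | ∃ a, f a ≠ a ∧ S = {a, f a}}.ncard := by
  classical
  set moved : Finset α := {a | f a ≠ a}
  set pair : α → Set α := fun a => {a, f a}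
  have hpairs : {S : Set α | ∃ a, f a ≠ a ∧ S = {a, f a}} = ↑(moved.image pair) := by
    ext S; simp [moved, pair, eq_comm]
  have hfiber : ∀ S ∈ moved.image pair, {b ∈ moved | pair b = S}.card = 2 := by
    simp only [Finset.mem_image]
    rintro _ ⟨a, ha, rfl⟩
    have hne : a ≠ f a := fun h => (Finset.mem_filter.mp ha).2 h.symm
    have : {b ∈ moved | pair b = pair a} = {a, f a} := by
      ext b
      simp only [moved, pair, Finset.mem_filter, Finset.mem_univ, true_and, Finset.mem_insert,
        Finset.mem_singleton, Set.pair_eq_pair_iff]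
      constructor
      · rintro ⟨-, ⟨rfl, -⟩ | ⟨rfl, -⟩⟩ <;> simp
      · rintro (rfl | rfl) <;> simp [hf _, hne, hne.symm]
    rw [this, Finset.card_pair hne]
  have hmoved : moved.card = 2 * (moved.image pair).card := by
    rw [Finset.card_eq_sum_card_image pair moved, Finset.sum_congr rfl hfiber,
      Finset.sum_const, smul_eq_mul, mul_comm]
  have hcompl : {a | f a = a}ᶜ = ↑moved := by ext; simp [moved]
  rw [hpairs, Set.ncard_coe_finset, ← hmoved, ← Nat.card_eq_fintype_card,
    ← Set.ncard_add_ncard_compl {a | f a = a}, hcompl, Set.ncard_coe_finset]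

end Function.Involutive

namespace RibbonGraph

variable (Γ : RibbonGraph)

theorem sum_valency_eq_card_H : ∑ v, Γ.valency v = Fintype.card Γ.H := by
  classical
  simp only [valency, Set.ncard_eq_toFinset_card', Set.toFinset_ofPred]
  exact (Finset.card_eq_sum_card_fiberwise fun h _ => Finset.mem_univ (Γ.ρ h)).symm

theorem numEdges_add_one_eq_card_V (h : Γ.betti = 0) :
    Γ.numEdges + 1 = Fintype.card Γ.V := by
  rw [betti] at h
  exact_mod_cast (by linarith : (Γ.numEdges : ℚ) + 1 = Fintype.card Γ.V)

theorem edgeSet_eq_empty_iff_numEdges_eq_zero : Γ.edgeSet = ∅ ↔ Γ.numEdges = 0 :=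
  (Set.ncard_eq_zero (Set.toFinite _)).symm

variable {Γ}

theorem IsStable.three_le_valency (hs : Γ.IsStable) {v : Γ.V} (hv : Γ.vertexLoop v = 0) :
    3 ≤ Γ.valency v := by
  have h := (hs v).2
  rw [hv] at h
  exact_mod_cast (by linarith : (3 : ℚ) ≤ Γ.valency v)

theorem valency_add_three_mul_le_sum_valency (hs : Γ.IsStable) (v₀ : Γ.V)
    (hother : ∀ v, v ≠ v₀ → Γ.vertexLoop v = 0) :
    Γ.valency v₀ + 3 * (Fintype.card Γ.V - 1) ≤ ∑ v, Γ.valency v := by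
  classical
  rw [← Finset.add_sum_erase _ _ (Finset.mem_univ v₀)]
  gcongr
  have h := Finset.card_nsmul_le_sum (Finset.univ.erase v₀) Γ.valency 3 fun v hv =>
    hs.three_le_valency (hother v (Finset.ne_of_mem_erase hv))
  rwa [Finset.card_erase_of_mem (Finset.mem_univ v₀), Finset.card_univ, smul_eq_mul,
    mul_comm] at h

end RibbonGraph

theorem RibbonGraph.ptree_numLegs_general
    (Γ : RibbonGraph) (hstable : Γ.IsStable)
    (v₀ : Γ.V)
    (hbetti : Γ.betti = 0)
    (hother : ∀ v : Γ.V, v ≠ v₀ → Γ.vertexLoop v = 0) :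
    (Γ.valency v₀ : ℚ) + (Fintype.card Γ.V : ℚ) - 1 ≤ (Γ.numLegs : ℚ) ∧
    Γ.valency v₀ ≤ Γ.numLegs ∧
    (Γ.valency v₀ = Γ.numLegs ↔ Fintype.card Γ.V = 1 ∧ Γ.edgeSet = ∅) := by
  have hV : 0 < Fintype.card Γ.V := Fintype.card_pos_iff.mpr ⟨v₀⟩
  have hE := Γ.numEdges_add_one_eq_card_V hbetti
  have hH := Γ.card_H_eq_numLegs_add_two_mul_numEdges
  have hsum := Γ.sum_valency_eq_card_H
  have hbound := valency_add_three_mul_le_sum_valency hstable v₀ hother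
  have hlegs : Γ.valency v₀ + Fintype.card Γ.V ≤ Γ.numLegs + 1 := by omega
  refine ⟨by rw [sub_le_iff_le_add]; exact_mod_cast hlegs, by omega, ?_⟩
  rw [edgeSet_eq_empty_iff_numEdges_eq_zero]
  constructor
  · omega
  · rintro ⟨hV1, hE0⟩
    have : Subsingleton Γ.V := Fintype.card_le_one_iff_subsingleton.mp hV1.le
    rw [Fintype.sum_subsingleton _ v₀] at hsum
    omega

/-- **Legs of a `p`-tree.**
Let `p ≥ 0` and let `Γ` be a connected stable ribbon graph that is a `p`-tree, i.e.
`b₁(Γ) = 0` and there is a vertex `v₀` with `l(v₀) = p` while `l(v) = 0` for every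
other vertex `v`.  Then `|L(Γ)| ≥ |v₀| + |V(Γ)| − 1`.  In particular the valency
`|v₀|` of `v₀` is at most the number of legs `|L(Γ)|`, with equality if and only if
`Γ` is a corolla (i.e. `|V(Γ)| = 1` and `E(Γ) = ∅`). -/
theorem RibbonGraph.ptree_numLegs
    (Γ : RibbonGraph) (hstable : Γ.IsStable) (hconn : Γ.Connected)
    (p : ℕ) (v₀ : Γ.V)
    (hbetti : Γ.betti = 0)
    (hv₀ : Γ.vertexLoop v₀ = (p : ℚ))
    (hother : ∀ v : Γ.V, v ≠ v₀ → Γ.vertexLoop v = 0) :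
    (Γ.valency v₀ : ℚ) + (Fintype.card Γ.V : ℚ) - 1 ≤ (Γ.numLegs : ℚ) ∧
    Γ.valency v₀ ≤ Γ.numLegs ∧
    (Γ.valency v₀ = Γ.numLegs ↔ Fintype.card Γ.V = 1 ∧ Γ.edgeSet = ∅) :=
  RibbonGraph.ptree_numLegs_general Γ hstable v₀ hbetti hother
end
end

section
/- The singular part is well-defined: if a function W : (0,1) → X admits two finite representations (g_r, I_r)_{r=1,…,R} and (g'_s, I'_s)_{s=1,…,S} — i.e. W(ε) − Σ_{r=1}^R g_r(ε) I_r → 0 and W(ε) − Σ_{s=1}^S g'_s(ε) I'_s → 0 in X as ε → 0⁺ — then Σ_{r=1}^R p(g_r)(ε) I_r = Σ_{s=1}^S p(g'_s)(ε) I'_s for every ε ∈ (0,1). -/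
open Filter Set

/-- A function `g : ℝ → ℝ` is in the class `𝒞` if it is infinitely differentiable
on the open unit interval `(0,1)` (only its values on `(0,1)` are relevant). -/
def SmoothOn01 (g : ℝ → ℝ) : Prop := ContDiffOn ℝ (⊤ : ℕ∞) g (Set.Ioo 0 1)

/-- A function `g : ℝ → ℝ` is in the class `𝒞_{≥0}` if it admits a limit as
`ε → 0⁺` within `(0,1)`. -/
def HasLimitAtZero (g : ℝ → ℝ) : Prop :=
  ∃ L : ℝ, Filter.Tendsto g (nhdsWithin 0 (Set.Ioo 0 1)) (nhds L)

/-- **The singular part is well-defined.**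
Fix a renormalization scheme: a subspace `Csing` (the complement `𝒞_{<0}`) consisting
of smooth functions on `(0,1)`, meeting the subspace `𝒞_{≥0}` of functions admitting a
limit at `0⁺` only in `0`, together with the projection `p` onto `Csing` along
`𝒞_{≥0}` (so `p g ∈ Csing` and `g − p g ∈ 𝒞_{≥0}` for every `g ∈ 𝒞`).  Let `X` be a
locally convex Hausdorff topological real vector space.  If a function
`W : (0,1) → X` admits two finite representations `(g_r, I_r)_{r}` and
`(g'_s, I'_s)_{s}` — i.e. `W(ε) − Σ_r g_r(ε) • I_r → 0` and
`W(ε) − Σ_s g'_s(ε) • I'_s → 0` in `X` as `ε → 0⁺` — then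
`Σ_r p(g_r)(ε) • I_r = Σ_s p(g'_s)(ε) • I'_s` for every `ε ∈ (0,1)`. -/
theorem singularPart_wellDefined
    {X : Type*} [AddCommGroup X] [Module ℝ X] [TopologicalSpace X]
    [IsTopologicalAddGroup X] [ContinuousSMul ℝ X] [LocallyConvexSpace ℝ X] [T2Space X]
    (Csing : Submodule ℝ (ℝ → ℝ))
    (hCsing : ∀ g ∈ Csing, SmoothOn01 g)
    (hdisj : ∀ g ∈ Csing, HasLimitAtZero g → g = 0)
    (p : (ℝ → ℝ) → ℝ → ℝ)
    (hp : ∀ g : ℝ → ℝ, SmoothOn01 g → p g ∈ Csing ∧ HasLimitAtZero (g - p g))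
    (W : ℝ → X) (R S : ℕ)
    (g : Fin R → ℝ → ℝ) (I : Fin R → X) (hg : ∀ r, SmoothOn01 (g r))
    (g' : Fin S → ℝ → ℝ) (I' : Fin S → X) (hg' : ∀ s, SmoothOn01 (g' s))
    (hW : Tendsto (fun ε => W ε - ∑ r, g r ε • I r)
      (nhdsWithin 0 (Set.Ioo 0 1)) (nhds 0))
    (hW' : Tendsto (fun ε => W ε - ∑ s, g' s ε • I' s)
      (nhdsWithin 0 (Set.Ioo 0 1)) (nhds 0)) :
    ∀ ε ∈ Set.Ioo (0 : ℝ) 1, ∑ r, p (g r) ε • I r = ∑ s, p (g' s) ε • I' s := by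
  classical
  -- limits of the regular parts
  choose L hL using fun r => (hp (g r) (hg r)).2
  choose L' hL' using fun s => (hp (g' s) (hg' s)).2
  set l := nhdsWithin (0:ℝ) (Set.Ioo 0 1) with hl
  -- difference of singular parts
  set D : ℝ → X := fun ε => ∑ r, p (g r) ε • I r - ∑ s, p (g' s) ε • I' s with hD
  have hA : Tendsto (fun ε => ∑ r, g r ε • I r - ∑ s, g' s ε • I' s) l (nhds 0) := by
    have := hW'.sub hW
    simp only [sub_zero] at this
    refine this.congr' (Eventually.of_forall fun ε => ?_) |>.mono_right ?_
    · abel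
    · simp
  have hB : Tendsto (fun ε => ∑ r, (g r ε - p (g r) ε) • I r) l (nhds (∑ r, L r • I r)) :=
    tendsto_finset_sum _ fun r _ => ((hL r).congr (fun ε => rfl)).smul_const (I r)
  have hC : Tendsto (fun ε => ∑ s, (g' s ε - p (g' s) ε) • I' s) l (nhds (∑ s, L' s • I' s)) :=
    tendsto_finset_sum _ fun s _ => ((hL' s).congr (fun ε => rfl)).smul_const (I' s)
  have hDlim : Tendsto D l (nhds (0 - ∑ r, L r • I r + ∑ s, L' s • I' s)) := by
    refine ((hA.sub hB).add hC).congr fun ε => ?_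
    simp only [hD, sub_smul, Finset.sum_sub_distrib]
    abel
  -- for every continuous linear functional φ, φ ∘ D vanishes identically on its domain
  have key : ∀ (φ : X →L[ℝ] ℝ) (ε : ℝ), φ (D ε) = 0 := by
    intro φ ε
    set f : ℝ → ℝ := fun t => φ (D t) with hf
    have hfeq : f = (∑ r, φ (I r) • p (g r)) - ∑ s, φ (I' s) • p (g' s) := by
      funext t
      simp [hf, hD, map_sub, map_sum, map_smul, mul_comm, Finset.sum_apply]
    have hmem : f ∈ Csing := by
      rw [hfeq]
      exact Submodule.sub_mem _
        (Submodule.sum_smul_mem _ _ fun r _ => (hp (g r) (hg r)).1)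
        (Submodule.sum_smul_mem _ _ fun s _ => (hp (g' s) (hg' s)).1)
    have hlim : HasLimitAtZero f :=
      ⟨_, (φ.continuous.tendsto _).comp hDlim⟩
    have := hdisj f hmem hlim
    exact congrFun this ε
  intro ε hε
  have hsep : SeparatingDual ℝ X := by infer_instance
  have : D ε = 0 := by
    by_contra h
    obtain ⟨φ, hφ⟩ := hsep.exists_ne_zero h
    exact hφ (key φ ε)
  simpa [hD, sub_eq_zero] using this
end

section
/- Suppose W : (0,1) → X admits the finite representation (g_r, I_r)_{r=1,…,R}, i.e. W(ε) − Σ_{r=1}^R g_r(ε) I_r → 0 in X as ε → 0⁺. Then: (a) the function ε ↦ W(ε) − Σ_{r=1}^R p(g_r)(ε) I_r converges in X as ε → 0⁺ (W minus its singular part is nonsingular); and (b) lim_{ε→0⁺} W(ε) exists in X if and only if Σ_{r=1}^R p(g_r)(ε) I_r = 0 for every ε ∈ (0,1) (W is nonsingular if and only if Sing(W) = 0). -/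
open Filter Set

/-- **Properties of the singular part.**
Fix a renormalization scheme: a subspace `Csing` (the complement `𝒞_{<0}`) consisting
of smooth functions on `(0,1)`, meeting the subspace `𝒞_{≥0}` of functions admitting a
limit at `0⁺` only in `0`, together with the projection `p` onto `Csing` along
`𝒞_{≥0}` (so `p g ∈ Csing` and `g − p g ∈ 𝒞_{≥0}` for every `g ∈ 𝒞`).  Let `X` be a
locally convex Hausdorff topological real vector space and suppose `W : (0,1) → X`
admits the finite representation `(g_r, I_r)_r`, i.e.
`W(ε) − Σ_r g_r(ε) • I_r → 0` in `X` as `ε → 0⁺`.  Then: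
(a) `ε ↦ W(ε) − Σ_r p(g_r)(ε) • I_r` converges in `X` as `ε → 0⁺`
(`W` minus its singular part is nonsingular); and
(b) `lim_{ε→0⁺} W(ε)` exists in `X` if and only if `Σ_r p(g_r)(ε) • I_r = 0` for
every `ε ∈ (0,1)` (`W` is nonsingular if and only if `Sing(W) = 0`). -/
theorem sub_singularPart_nonsingular_and_nonsingular_iff
    {X : Type*} [AddCommGroup X] [Module ℝ X] [TopologicalSpace X]
    [IsTopologicalAddGroup X] [ContinuousSMul ℝ X] [LocallyConvexSpace ℝ X] [T2Space X]
    (Csing : Submodule ℝ (ℝ → ℝ))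
    (hCsing : ∀ g ∈ Csing, SmoothOn01 g)
    (hdisj : ∀ g ∈ Csing, HasLimitAtZero g → g = 0)
    (p : (ℝ → ℝ) → ℝ → ℝ)
    (hp : ∀ g : ℝ → ℝ, SmoothOn01 g → p g ∈ Csing ∧ HasLimitAtZero (g - p g))
    (W : ℝ → X) (R : ℕ)
    (g : Fin R → ℝ → ℝ) (I : Fin R → X) (hg : ∀ r, SmoothOn01 (g r))
    (hW : Tendsto (fun ε => W ε - ∑ r, g r ε • I r)
      (nhdsWithin 0 (Set.Ioo 0 1)) (nhds 0)) :
    (∃ x : X, Tendsto (fun ε => W ε - ∑ r, p (g r) ε • I r)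
      (nhdsWithin 0 (Set.Ioo 0 1)) (nhds x)) ∧
    ((∃ x : X, Tendsto W (nhdsWithin 0 (Set.Ioo 0 1)) (nhds x)) ↔
      ∀ ε ∈ Set.Ioo (0 : ℝ) 1, ∑ r, p (g r) ε • I r = 0) := by

  classical
  choose L hL using fun r => (hp (g r) (hg r)).2
  set l := nhdsWithin (0:ℝ) (Set.Ioo 0 1) with hl
  have hsum : Tendsto (fun ε => ∑ r, (g r ε - p (g r) ε) • I r) l
      (nhds (∑ r, L r • I r)) := by
    apply tendsto_finset_sum
    intro r _
    exact ((hL r).smul_const (I r)).congr (fun ε => rfl)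
  have ha : Tendsto (fun ε => W ε - ∑ r, p (g r) ε • I r) l
      (nhds (∑ r, L r • I r)) := by
    have h2 := hW.add hsum
    rw [zero_add] at h2
    refine h2.congr fun ε => ?_
    simp only [sub_smul, Finset.sum_sub_distrib]
    abel
  refine ⟨⟨_, ha⟩, ?_, ?_⟩
  · rintro ⟨x, hx⟩ ε hε
    have hS : Tendsto (fun ε => ∑ r, p (g r) ε • I r) l
        (nhds (x - ∑ r, L r • I r)) := by
      have h3 := hx.sub ha
      refine h3.congr fun ε => ?_
      abel
    by_contra hne
    obtain ⟨φ, hφ⟩ := SeparatingDual.exists_ne_zero (R := ℝ) hne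
    set h : ℝ → ℝ := fun t => ∑ r, φ (I r) * p (g r) t with hh
    have hmem : h ∈ Csing := by
      have : h = ∑ r, φ (I r) • p (g r) := by
        funext t
        simp [hh, Finset.sum_apply]
      rw [this]
      exact Submodule.sum_mem _ fun r _ =>
        Submodule.smul_mem _ _ (hp (g r) (hg r)).1
    have hlim : HasLimitAtZero h := by
      refine ⟨φ (x - ∑ r, L r • I r), ?_⟩
      have h4 := (φ.continuous.tendsto _).comp hS
      refine h4.congr fun t => ?_
      simp [hh, Function.comp, map_sum, mul_comm]
    have h0 := hdisj h hmem hlim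
    apply hφ
    have hz : h ε = 0 := by rw [h0]; rfl
    calc φ (∑ r, p (g r) ε • I r) = h ε := by
          simp [hh, map_sum, mul_comm]
      _ = 0 := hz
  · intro hz
    refine ⟨∑ r, L r • I r, ha.congr' ?_⟩
    filter_upwards [self_mem_nhdsWithin] with ε hε
    rw [hz ε hε, sub_zero]
end

section
/- For the matrix Frobenius algebra M_N(𝕜): for every g, b ≥ 0, every k ≥ 1, all positive integers r₁,…,r_k, and all matrices A_{j,s} ∈ M_N(𝕜) (1 ≤ j ≤ k, 1 ≤ s ≤ r_j), the open topological field theory amplitude takes the value T^{g,b}_{r₁,…,r_k}(A_{1,1},…,A_{1,r₁};…;A_{k,1},…,A_{k,r_k}) = N^b · ∏_{j=1}^k Tr(A_{j,1}⋯A_{j,r_j}), where N^b denotes the b-th power of the image of N in 𝕜. -/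
noncomputable section

variable (𝕜 : Type*) [CommRing 𝕜]

/-- `x_{(a,c)} := E_{ac}`, the matrix unit with a `1` in position `(a,c)`. -/
def matX (N : ℕ) (i : Fin N × Fin N) : Matrix (Fin N) (Fin N) 𝕜 :=
  Matrix.single i.1 i.2 1

/-- `y_{(a,c)} := E_{ca}`, the dual of `x_{(a,c)}` for the trace pairing. -/
def matY (N : ℕ) (i : Fin N × Fin N) : Matrix (Fin N) (Fin N) 𝕜 :=
  Matrix.single i.2 i.1 1

/-- The central element `Ξ_bdry := Σ_i x_i y_i` of the matrix Frobenius algebra. -/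
def xiBdry (N : ℕ) : Matrix (Fin N) (Fin N) 𝕜 :=
  ∑ i : Fin N × Fin N, matX 𝕜 N i * matY 𝕜 N i

/-- The central element `Ξ_gen := Σ_{i,j} x_i x_j y_i y_j` of the matrix Frobenius
algebra (all Koszul signs equal `+1` since the algebra is in degree zero). -/
def xiGen (N : ℕ) : Matrix (Fin N) (Fin N) 𝕜 :=
  ∑ i : Fin N × Fin N, ∑ j : Fin N × Fin N,
    matX 𝕜 N i * matX 𝕜 N j * matY 𝕜 N i * matY 𝕜 N j

/-- The open topological field theory amplitude `T^{g,b}_{r₁,…,r_k}` of the matrix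
Frobenius algebra `M_N(𝕜)`, evaluated on matrices `A j s` (`j < k`, `s < r j`):
`Σ_{i₁,…,i_k} Tr(x_{i_k} ⋯ x_{i_1}) ·
  Tr(Ξ_bdry^b Ξ_gen^g y_{i₁} A_{1,1} ⋯ A_{1,r₁} ⋯ y_{i_k} A_{k,1} ⋯ A_{k,r_k})`,
the sum running over all `k`-tuples of indices in `{1,…,N}²`. -/
def otftAmplitude (N gg bb k : ℕ) (r : Fin k → ℕ)
    (A : (j : Fin k) → Fin (r j) → Matrix (Fin N) (Fin N) 𝕜) : 𝕜 :=
  ∑ i : Fin k → Fin N × Fin N,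
    Matrix.trace ((List.ofFn fun j : Fin k => matX 𝕜 N (i j)).reverse.prod) *
      Matrix.trace (xiBdry 𝕜 N ^ bb * xiGen 𝕜 N ^ gg *
        (List.ofFn fun j : Fin k =>
          matY 𝕜 N (i j) * (List.ofFn fun s : Fin (r j) => A j s).prod).prod)

/-!
Since `Ξ_bdry = N • 1` and `Ξ_gen = 1`, the amplitude is `N ^ b` times
`Σ_i Tr(x_{i_k} ⋯ x_{i_1}) · Tr(y_{i_1} B_1 ⋯ y_{i_k} B_k)` with `B_j = A_{j,1} ⋯ A_{j,r_j}`.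
Summing over `i_1` with the dual-basis identity `Σ_i Tr(P x_i) y_i = P` sews the two traces into
`Tr(x_{i_k} ⋯ x_{i_2} B_1 y_{i_2} B_2 ⋯ y_{i_k} B_k)`, and the identity
`Σ_i x_i D y_i = Tr(D) • 1` then removes the pairs `x_{i_j}, y_{i_j}` from the inside out,
each splitting off a factor `Tr(B_j)`.
-/

open Matrix

theorem Fin.sum_pi_succ {ι M : Type*} [Fintype ι] [AddCommMonoid M] (m : ℕ)
    (f : (Fin (m + 1) → ι) → M) : ∑ i, f i = ∑ i' : Fin m → ι, ∑ i₀ : ι, f (Fin.cons i₀ i') := by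
  rw [← (Fin.consEquiv fun _ => ι).sum_comp, Fintype.sum_prod_type, Finset.sum_comm]
  rfl

section

variable {𝕜} {N : ℕ}

theorem sum_trace_mul_matX_smul_matY (P : Matrix (Fin N) (Fin N) 𝕜) :
    ∑ i, trace (P * matX 𝕜 N i) • matY 𝕜 N i = P := by
  conv_rhs => rw [matrix_eq_sum_single P]
  simp [matX, matY, trace_mul_single, Fintype.sum_prod_type, smul_single]
  exact Finset.sum_comm

theorem sum_matX_mul_mul_matY (D : Matrix (Fin N) (Fin N) 𝕜) :
    ∑ i, matX 𝕜 N i * D * matY 𝕜 N i = trace D • 1 := by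
  rw [← sum_single_one, Finset.smul_sum]
  simp only [matX, matY, single_mul_mul_single, one_mul, mul_one, Fintype.sum_prod_type, trace,
    diag_apply, smul_single, smul_eq_mul]
  exact Finset.sum_congr rfl fun a _ => (map_sum (singleAddMonoidHom (α := 𝕜) a a) _ _).symm

theorem xiBdry_eq : xiBdry 𝕜 N = (N : 𝕜) • 1 := by
  simpa [xiBdry] using sum_matX_mul_mul_matY (1 : Matrix (Fin N) (Fin N) 𝕜)

theorem xiGen_eq_one : xiGen 𝕜 N = 1 := by
  have h : ∀ j, ∑ i, matX 𝕜 N i * matX 𝕜 N j * matY 𝕜 N i * matY 𝕜 N j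
      = trace (matX 𝕜 N j) • matY 𝕜 N j := fun j => by
    rw [← Finset.sum_mul, sum_matX_mul_mul_matY, smul_one_mul]
  rw [xiGen, Finset.sum_comm, Finset.sum_congr rfl fun j _ => h j]
  simpa using sum_trace_mul_matX_smul_matY (1 : Matrix (Fin N) (Fin N) 𝕜)

theorem sum_trace_mul_matX_mul_trace_matY_mul (P R : Matrix (Fin N) (Fin N) 𝕜) :
    ∑ i, trace (P * matX 𝕜 N i) * trace (matY 𝕜 N i * R) = trace (P * R) := by
  conv_rhs => rw [← sum_trace_mul_matX_smul_matY P]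
  simp [Finset.sum_mul, trace_sum, trace_smul]

theorem sum_trace_mul_matX_mul_mul_matY_mul (P D Q : Matrix (Fin N) (Fin N) 𝕜) :
    ∑ i, trace (P * (matX 𝕜 N i * (D * (matY 𝕜 N i * Q)))) = trace D * trace (P * Q) := by
  have h : ∀ i, P * (matX 𝕜 N i * (D * (matY 𝕜 N i * Q))) =
      P * (matX 𝕜 N i * D * matY 𝕜 N i) * Q := fun i => by simp only [mul_assoc]
  rw [← trace_sum, Finset.sum_congr rfl fun i _ => h i, ← Finset.sum_mul, ← Finset.mul_sum,
    sum_matX_mul_mul_matY]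
  simp [trace_smul]

theorem sum_trace_reverse_prod_matX_mul_prod_matY (m : ℕ)
    (B : Fin (m + 1) → Matrix (Fin N) (Fin N) 𝕜) :
    ∑ i : Fin m → Fin N × Fin N,
      trace ((List.ofFn fun j => matX 𝕜 N (i j)).reverse.prod *
        (B 0 * (List.ofFn fun j => matY 𝕜 N (i j) * B j.succ).prod)) = ∏ j, trace (B j) := by
  induction m with
  | zero => simp
  | succ m ih =>
    rw [Fin.sum_pi_succ, Fin.prod_univ_succ, ← ih, Finset.mul_sum]
    refine Finset.sum_congr rfl fun i _ => ?_
    simp only [List.ofFn_succ, Fin.cons_zero, Fin.cons_succ, List.reverse_cons, List.prod_append,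
      List.prod_cons, List.prod_nil, mul_one, mul_assoc]
    exact sum_trace_mul_matX_mul_mul_matY_mul _ _ _

theorem sum_trace_reverse_prod_matX_mul_trace_prod_matY (m : ℕ)
    (B : Fin (m + 1) → Matrix (Fin N) (Fin N) 𝕜) :
    ∑ i : Fin (m + 1) → Fin N × Fin N,
      trace (List.ofFn fun j => matX 𝕜 N (i j)).reverse.prod *
        trace (List.ofFn fun j => matY 𝕜 N (i j) * B j).prod = ∏ j, trace (B j) := by
  rw [Fin.sum_pi_succ, ← sum_trace_reverse_prod_matX_mul_prod_matY]
  refine Finset.sum_congr rfl fun i _ => ?_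
  simp only [List.ofFn_succ, Fin.cons_zero, Fin.cons_succ, List.reverse_cons, List.prod_append,
    List.prod_cons, List.prod_nil, mul_one, mul_assoc]
  exact sum_trace_mul_matX_mul_trace_matY_mul _ _

end

theorem otftAmplitude_matrix_eq
    (N : ℕ) (gg bb k : ℕ) (hk : 1 ≤ k)
    (r : Fin k → ℕ)
    (A : (j : Fin k) → Fin (r j) → Matrix (Fin N) (Fin N) 𝕜) :
    otftAmplitude 𝕜 N gg bb k r A =
      (N : 𝕜) ^ bb *
        ∏ j : Fin k, Matrix.trace (List.ofFn fun s : Fin (r j) => A j s).prod := by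
  obtain ⟨m, rfl⟩ : ∃ m, k = m + 1 := ⟨k - 1, by omega⟩
  have hC : xiBdry 𝕜 N ^ bb * xiGen 𝕜 N ^ gg = (N : 𝕜) ^ bb • 1 := by
    rw [xiBdry_eq, xiGen_eq_one, one_pow, mul_one, smul_pow, one_pow]
  simp only [otftAmplitude, hC, smul_mul, one_mul, trace_smul, smul_eq_mul,
    mul_left_comm _ ((N : 𝕜) ^ bb), ← Finset.mul_sum]
  rw [sum_trace_reverse_prod_matX_mul_trace_prod_matY]
end
end
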